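/- arXiv:1905.12063 — 3 statements merged into one kernel-verified Lean document; each statement's English description precedes it below -/
import Mathlib

section
/- If an object $O_1$ strongly observationally refines an object $O_2$, then for every program $P$ and every hyperproperty $\varphi$ of $P$, $P\times O_2\models\varphi$ implies $P\times O_1\models\varphi$. -/
set_option autoImplicit false

/-- A labeled transition system over an alphabet of actions drawn from `Act`:
a set of states, an initial state, an alphabet (subset of `Act`), and a
transition relation. -/
structure LTS (Act : Type) : Type 1 where
  State : Type
  init : State
  alphabet : Set Act
  tr : State → Act → State → Prop

namespace LTS

variable {Act : Type}

/-- `Steps A s τ s'`: there is an execution of `A` from `s` to `s'` whose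
sequence of actions is `τ`. -/
inductive Steps (A : LTS Act) : A.State → List Act → A.State → Prop
  | refl (s : A.State) : Steps A s [] s
  | step {s s' s'' : A.State} {a : Act} {τ : List Act} :
      A.tr s a s' → Steps A s' τ s'' → Steps A s (a :: τ) s''

/-- The set of traces of an LTS. -/
def Traces (A : LTS Act) : Set (List Act) := {τ | ∃ s, A.Steps A.init τ s}

/-- A state is reachable if some execution from the initial state ends in it. -/
def Reachable (A : LTS Act) (s : A.State) : Prop := ∃ τ, A.Steps A.init τ s

/-- A deterministic LTS: at most one successor per state and action (hence at
most one state reachable via any given sequence of actions). -/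
def Deterministic (A : LTS Act) : Prop :=
  ∀ s a s₁ s₂, A.tr s a s₁ → A.tr s a s₂ → s₁ = s₂

/-- The standard synchronized product of two LTSs: they synchronize on shared
alphabet actions, and move independently on non-shared actions. -/
def prod (A B : LTS Act) : LTS Act where
  State := A.State × B.State
  init := (A.init, B.init)
  alphabet := A.alphabet ∪ B.alphabet
  tr p a q :=
    (a ∈ A.alphabet ∧ a ∈ B.alphabet ∧ A.tr p.1 a q.1 ∧ B.tr p.2 a q.2) ∨
    (a ∈ A.alphabet ∧ a ∉ B.alphabet ∧ A.tr p.1 a q.1 ∧ q.2 = p.2) ∨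
    (a ∉ A.alphabet ∧ a ∈ B.alphabet ∧ B.tr p.2 a q.2 ∧ q.1 = p.1)

end LTS

open Classical in
/-- `proj Γ τ` is the projection `τ|Γ`: the maximal subsequence of `τ` over
the alphabet `Γ`. -/
noncomputable def proj {Act : Type} (Γ : Set Act) : List Act → List Act
  | [] => []
  | a :: τ => if a ∈ Γ then a :: proj Γ τ else proj Γ τ

/-- `A₁` Γ-refines `A₂`: `T(A₁)|Γ ⊆ T(A₂)|Γ`. -/
def GammaRefines {Act : Type} (A₁ A₂ : LTS Act) (Γ : Set Act) : Prop :=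
  proj Γ '' A₁.Traces ⊆ proj Γ '' A₂.Traces

/-- `F` is a `Γ`-forward simulation from `A₁` to `A₂`. -/
def ForwardSim {Act : Type} (Γ : Set Act) (A₁ A₂ : LTS Act)
    (F : A₁.State → A₂.State → Prop) : Prop :=
  F A₁.init A₂.init ∧
  ∀ s₁ a s₁' s₂, A₁.tr s₁ a s₁' → F s₁ s₂ →
    ∃ s₂' τ, F s₁' s₂' ∧ A₂.Steps s₂ τ s₂' ∧ proj Γ τ = proj Γ [a]

/-- A scheduler: prescribes a set of possible next actions after a given
sequence of previous actions. -/
def Scheduler (Act : Type) : Type := List Act → Set Act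

/-- A trace is consistent with a scheduler `S` if each of its actions is
allowed by `S` after the preceding prefix. -/
def ConsistentWith {Act : Type} (S : Scheduler Act) (τ : List Act) : Prop :=
  ∀ (i : ℕ) (h : i < τ.length), τ.get ⟨i, h⟩ ∈ S (τ.take i)

/-- `T(A,S)`: the traces of `A` consistent with the scheduler `S`. -/
def TracesWith {Act : Type} (A : LTS Act) (S : Scheduler Act) : Set (List Act) :=
  {τ | τ ∈ A.Traces ∧ ConsistentWith S τ}

/-- A scheduler is admitted by `A` if after every trace of `A` consistent with
it, it prescribes a nonempty set of actions, all enabled in the state reached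
after that trace. -/
def AdmittedBy {Act : Type} (S : Scheduler Act) (A : LTS Act) : Prop :=
  ∀ τ ∈ TracesWith A S, (S τ).Nonempty ∧
    ∀ a ∈ S τ, ∀ s, A.Steps A.init τ s → ∃ s', A.tr s a s'

/-- A scheduler of a product `P × O` is deterministic when, after any sequence,
it either prescribes only program actions or fixes a unique action. -/
def DetScheduler {Act : Type} (S : Scheduler Act) (Sp : Set Act) : Prop :=
  ∀ τ, S τ ⊆ Sp ∨ ∃ a, S τ = {a}

/-- The LTS `A_S` of a scheduler `S`: states are sequences of actions, and a
transition labeled `a` links `τ` to `τ ++ [a]` provided `a ∈ S τ`. -/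
def schedLTS {Act : Type} (S : Scheduler Act) (Alph : Set Act) : LTS Act where
  State := List Act
  init := []
  alphabet := Alph
  tr τ a τ' := a ∈ S τ ∧ τ' = τ ++ [a]

/-- OActions: calls `call(m,d,k)`, returns `ret(m,d,k)` (method `m`,
argument/return value `d`, operation identifier `k`), linearization-point
actions `lin(k)`, and other (internal or program) actions. -/
inductive OAction (M D K I : Type) : Type
  | call (m : M) (d : D) (k : K)
  | ret (m : M) (d : D) (k : K)
  | lin (k : K)
  | other (i : I)

/-- The set of all call actions. -/
def Calls {M D K I : Type} : Set (OAction M D K I) :=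
  {a | ∃ m d k, a = OAction.call m d k}

/-- The set of all return actions. -/
def Rets {M D K I : Type} : Set (OAction M D K I) :=
  {a | ∃ m d k, a = OAction.ret m d k}

/-- The set of all linearization-point actions. -/
def Lins {M D K I : Type} : Set (OAction M D K I) :=
  {a | ∃ k, a = OAction.lin k}

/-- A call action and a return action are matching when they have the same
method and the same operation identifier. -/
def Matching {M D K I : Type} (a b : OAction M D K I) : Prop :=
  ∃ m d d' k, a = OAction.call m d k ∧ b = OAction.ret m d' k

/-- A history is well-formed when every return action has a preceding matching
call action. -/
def WellFormedHist {M D K I : Type} (h : List (OAction M D K I)) : Prop :=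
  ∀ l₁ b l₂, h = l₁ ++ b :: l₂ → b ∈ Rets → ∃ a ∈ l₁, Matching a b

/-- A call action is unmatched in `h` when `h` contains no matching return. -/
def UnmatchedCall {M D K I : Type} (h : List (OAction M D K I))
    (a : OAction M D K I) : Prop :=
  a ∈ h ∧ a ∈ Calls ∧ ∀ b ∈ h, ¬ Matching a b

/-- A history is sequential if every call action is immediately followed by its
matching return. -/
def SequentialHist {M D K I : Type} (h : List (OAction M D K I)) : Prop :=
  ∀ l₁ a l₂, h = l₁ ++ a :: l₂ → a ∈ Calls →
    ∃ b l₃, l₂ = b :: l₃ ∧ Matching a b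

/-- `a` occurs before `b` in the sequence `l`. -/
def OccursBefore {M D K I : Type} (a b : OAction M D K I)
    (l : List (OAction M D K I)) : Prop :=
  ∃ l₁ l₂ l₃, l = l₁ ++ a :: (l₂ ++ b :: l₃)

/-- `LinRel h₁ h₂` (i.e. `h₁ ⊑ h₂`): there is a well-formed `h₁'` obtained from
`h₁` by deleting unmatched call actions and appending return actions matching
unmatched calls of `h₁`, such that `h₂` is a permutation of `h₁'` preserving
the order between return and call actions. `h₂` is a linearization of `h₁`. -/
def LinRel {M D K I : Type} (h₁ h₂ : List (OAction M D K I)) : Prop :=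
  ∃ hdel r : List (OAction M D K I),
    hdel.Sublist h₁ ∧
    (∀ a, a ∈ h₁ → a ∉ hdel → UnmatchedCall h₁ a) ∧
    (∀ b ∈ r, b ∈ Rets ∧ ∃ a, UnmatchedCall h₁ a ∧ Matching a b) ∧
    WellFormedHist (hdel ++ r) ∧
    h₂.Perm (hdel ++ r) ∧
    (∀ a b : OAction M D K I, a ∈ Rets → b ∈ Calls →
      (OccursBefore a b (hdel ++ r) ↔ OccursBefore a b h₂))

/-- An object over call actions `C` and return actions `R`: a deterministic
LTS whose alphabet consists of `C`, `R` and internal actions, and whose traces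
have well-formed histories. -/
structure IsObject {M D K I : Type} (O : LTS (OAction M D K I))
    (C R : Set (OAction M D K I)) : Prop where
  callsSub : C ⊆ Calls
  retsSub : R ⊆ Rets
  alphSub : C ∪ R ⊆ O.alphabet
  internalNotCR : ∀ a ∈ O.alphabet, a ∉ C ∪ R →
    a ∉ (Calls : Set (OAction M D K I)) ∧ a ∉ (Rets : Set (OAction M D K I))
  trInAlph : ∀ s a s', O.tr s a s' → a ∈ O.alphabet
  det : O.Deterministic
  wf : ∀ τ ∈ O.Traces, WellFormedHist (proj (C ∪ R) τ)

/-- A program over alphabet `Sp ∪ C ∪ R`: a deterministic LTS whose program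
actions `Sp` are disjoint from the call and return actions. -/
structure IsProgram {M D K I : Type} (P : LTS (OAction M D K I))
    (C R Sp : Set (OAction M D K I)) : Prop where
  alph : P.alphabet = Sp ∪ (C ∪ R)
  disj : Disjoint Sp (C ∪ R)
  trInAlph : ∀ s a s', P.tr s a s' → a ∈ P.alphabet
  det : P.Deterministic

/-- The set of histories `H(O)` of an object. -/
def Hists {M D K I : Type} (O : LTS (OAction M D K I))
    (C R : Set (OAction M D K I)) : Set (List (OAction M D K I)) :=
  proj (C ∪ R) '' O.Traces

/-- `O₁` observationally refines `O₂`: for every program `P` over alphabet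
`Sp ∪ C ∪ R`, `T(P × O₁)|Sp ⊆ T(P × O₂)|Sp`. -/
def ObsRefines {M D K I : Type} (O₁ O₂ : LTS (OAction M D K I))
    (C R : Set (OAction M D K I)) : Prop :=
  ∀ (Sp : Set (OAction M D K I)) (P : LTS (OAction M D K I)),
    IsProgram P C R Sp → Disjoint Sp O₁.alphabet → Disjoint Sp O₂.alphabet →
    proj Sp '' (P.prod O₁).Traces ⊆ proj Sp '' (P.prod O₂).Traces

/-- `O₁ ≤ₛ O₂`: `O₁` strongly observationally refines `O₂`: for every program
`P` and every deterministic scheduler `S₁` admitted by `P × O₁`, there is a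
deterministic scheduler `S₂` admitted by `P × O₂` with
`T(P × O₁, S₁)|Sp = T(P × O₂, S₂)|Sp`. -/
def StrongRefines {M D K I : Type} (O₁ O₂ : LTS (OAction M D K I))
    (C R : Set (OAction M D K I)) : Prop :=
  ∀ (Sp : Set (OAction M D K I)) (P : LTS (OAction M D K I)),
    IsProgram P C R Sp → Disjoint Sp O₁.alphabet → Disjoint Sp O₂.alphabet →
    ∀ S₁ : Scheduler (OAction M D K I), DetScheduler S₁ Sp →
      AdmittedBy S₁ (P.prod O₁) →
      ∃ S₂ : Scheduler (OAction M D K I), DetScheduler S₂ Sp ∧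
        AdmittedBy S₂ (P.prod O₂) ∧
        proj Sp '' TracesWith (P.prod O₁) S₁ =
          proj Sp '' TracesWith (P.prod O₂) S₂

/-- `P × O ⊨ φ`: the hyperproperty `φ` (a set of sets of sequences of program
actions) is satisfied by the program `P` with the object `O`:
`T(P × O, S)|Sp ∈ φ` for every deterministic scheduler `S`. -/
def Satisfies {M D K I : Type} (P O : LTS (OAction M D K I))
    (Sp : Set (OAction M D K I))
    (φ : Set (Set (List (OAction M D K I)))) : Prop :=
  ∀ S : Scheduler (OAction M D K I), DetScheduler S Sp →
    AdmittedBy S (P.prod O) →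
    proj Sp '' TracesWith (P.prod O) S ∈ φ

/-- `O₁ ⊑ O₂`: every history of `O₁` has a linearization that is a sequential
history of `O₂`. -/
def Linearizable {M D K I : Type} (O₁ O₂ : LTS (OAction M D K I))
    (C R : Set (OAction M D K I)) : Prop :=
  ∀ h₁ ∈ Hists O₁ C R,
    ∃ h₂ ∈ Hists O₂ C R, SequentialHist h₂ ∧ LinRel h₁ h₂

/-- An object is atomic if its set of histories is the set of histories
linearizable w.r.t. some set `Seq` of sequential histories. -/
def IsAtomicObject {M D K I : Type} (O : LTS (OAction M D K I))
    (C R : Set (OAction M D K I)) : Prop :=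
  ∃ Seq : Set (List (OAction M D K I)),
    (∀ h ∈ Seq, SequentialHist h ∧ WellFormedHist h) ∧
    Hists O C R = {h | ∃ h' ∈ Seq, LinRel h h'}

/-- Standard assumptions on objects: call actions cannot be disabled and
cannot disable other actions, and return actions cannot enable other
actions. -/
structure CallRetAssumptions {M D K I : Type} (O : LTS (OAction M D K I))
    (C R : Set (OAction M D K I)) : Prop where
  callsEnabled : ∀ s, O.Reachable s → ∀ c ∈ C, ∃ s', O.tr s c s'
  callsNoDisable : ∀ s c s', c ∈ C → O.tr s c s' →
    ∀ a s₁, O.tr s a s₁ → ∃ s₁', O.tr s' a s₁'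
  retsNoEnable : ∀ s r s', r ∈ R → O.tr s r s' →
    ∀ a s₁, O.tr s' a s₁ → ∃ s₁', O.tr s a s₁'

/-- The atomic object defined by a set `Seq` of sequential histories: states
are pairs `(h, h_s)` with `h_s ∈ Seq` and `h ⊑ h_s`; call actions append to
`h`; return actions append to `h` and must occur in `h_s`; linearization-point
actions `lin(k)` append a call/return pair with identifier `k` to `h_s`. -/
def AtomicLTS {M D K I : Type} (Seq : Set (List (OAction M D K I))) :
    LTS (OAction M D K I) where
  State := List (OAction M D K I) × List (OAction M D K I)
  init := ([], [])
  alphabet := Calls ∪ Rets ∪ Lins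
  tr p a q :=
    (q.2 ∈ Seq ∧ LinRel q.1 q.2) ∧
    ((a ∈ Calls ∧ q.1 = p.1 ++ [a] ∧ q.2 = p.2) ∨
     (a ∈ Rets ∧ q.1 = p.1 ++ [a] ∧ q.2 = p.2 ∧ a ∈ q.2) ∨
     (∃ k, a = OAction.lin k ∧ q.1 = p.1 ∧
        ∃ m d₁ d₂, q.2 = p.2 ++ [OAction.call m d₁ k, OAction.ret m d₂ k]))

/-- `O₁` is strongly linearizable w.r.t. the atomic object defined by `Seq`:
there is a function `f` from traces of `O₁` to `Seq` such that (1) `hist(τ) ⊑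
f(τ)` for every trace `τ`, and (2) `f` is prefix-preserving. -/
def StronglyLinearizable {M D K I : Type} (O₁ : LTS (OAction M D K I))
    (Seq : Set (List (OAction M D K I))) : Prop :=
  ∃ f : List (OAction M D K I) → List (OAction M D K I),
    (∀ τ ∈ O₁.Traces, f τ ∈ Seq ∧
      LinRel (proj ((Calls : Set (OAction M D K I)) ∪ Rets) τ) (f τ)) ∧
    (∀ τ₁ τ₂, τ₁ ∈ O₁.Traces → τ₂ ∈ O₁.Traces → τ₁ <+: τ₂ → f τ₁ <+: f τ₂)

theorem strongRefines_preserves_hyperproperties_general {M D K I : Type}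
    (O₁ O₂ : LTS (OAction M D K I)) (C R : Set (OAction M D K I))
    (href : StrongRefines O₁ O₂ C R)
    (Sp : Set (OAction M D K I)) (P : LTS (OAction M D K I))
    (hP : IsProgram P C R Sp)
    (hd₁ : Disjoint Sp O₁.alphabet) (hd₂ : Disjoint Sp O₂.alphabet)
    (φ : Set (Set (List (OAction M D K I))))
    (hsat : Satisfies P O₂ Sp φ) :
    Satisfies P O₁ Sp φ := by
  intro S₁ hdet₁ hadm₁
  obtain ⟨S₂, hdet₂, hadm₂, htraces⟩ := href Sp P hP hd₁ hd₂ S₁ hdet₁ hadm₁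
  exact htraces ▸ hsat S₂ hdet₂ hadm₂

/-- If `O₁` strongly observationally refines `O₂`, then for
every program `P` and every hyperproperty `φ` of `P`, `P × O₂ ⊨ φ` implies
`P × O₁ ⊨ φ`. -/
theorem strongRefines_preserves_hyperproperties {M D K I : Type}
    (O₁ O₂ : LTS (OAction M D K I)) (C R : Set (OAction M D K I))
    (h₁ : IsObject O₁ C R) (h₂ : IsObject O₂ C R)
    (href : StrongRefines O₁ O₂ C R)
    (Sp : Set (OAction M D K I)) (P : LTS (OAction M D K I))
    (hP : IsProgram P C R Sp)
    (hd₁ : Disjoint Sp O₁.alphabet) (hd₂ : Disjoint Sp O₂.alphabet)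
    (φ : Set (Set (List (OAction M D K I))))
    (hsat : Satisfies P O₂ Sp φ) :
    Satisfies P O₁ Sp φ :=
  strongRefines_preserves_hyperproperties_general O₁ O₂ C R href Sp P hP hd₁ hd₂ φ hsat
end

section
/- If an object $O_1$ strongly observationally refines an object $O_2$ ($O_1\le_s O_2$), then $O_1$ observationally refines $O_2$, i.e., for every program $P$ over alphabet $\Sigma_p\cup C\cup R$, $T(P\times O_1)|\Sigma_p \subseteq T(P\times O_2)|\Sigma_p$. -/
set_option autoImplicit false

section Helpers
namespace SRefAux
open LTS
variable {Act : Type}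

lemma proj_append (Γ : Set Act) (l₁ l₂ : List Act) :
    proj Γ (l₁ ++ l₂) = proj Γ l₁ ++ proj Γ l₂ := by
  induction l₁ with
  | nil => simp [proj]
  | cons a t ih => simp only [List.cons_append, proj]; split <;> simp [ih]

lemma mem_proj {Γ : Set Act} {a : Act} {l : List Act} (h : a ∈ proj Γ l) : a ∈ Γ := by
  induction l with
  | nil => simp [proj] at h
  | cons b t ih =>
    simp only [proj] at h
    by_cases hb : b ∈ Γ
    · simp only [hb, if_true, List.mem_cons] at h
      rcases h with h | h
      · exact h ▸ hb
      · exact ih h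
    · simp only [hb, if_false] at h
      exact ih h

lemma proj_proj {Γ Δ : Set Act} (h : Γ ⊆ Δ) (l : List Act) :
    proj Γ (proj Δ l) = proj Γ l := by
  induction l with
  | nil => simp [proj]
  | cons a t ih =>
    simp only [proj]
    by_cases hΔ : a ∈ Δ
    · simp only [hΔ, if_true, proj, ih]
    · have : a ∉ Γ := fun hΓ => hΔ (h hΓ)
      simp [hΔ, this, ih]

lemma proj_empty (l : List Act) : proj (∅ : Set Act) l = [] := by
  induction l with
  | nil => simp [proj]
  | cons a t ih => simp [proj, ih]

lemma steps_append {A : LTS Act} {s s' s'' : A.State} {l₁ l₂ : List Act}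
    (h₁ : A.Steps s l₁ s') (h₂ : A.Steps s' l₂ s'') : A.Steps s (l₁ ++ l₂) s'' := by
  induction h₁ with
  | refl => exact h₂
  | step htr _ ih => exact Steps.step htr (ih h₂)

lemma steps_take_drop {A : LTS Act} {s s' : A.State} {l : List Act}
    (h : A.Steps s l s') (i : ℕ) :
    ∃ u, A.Steps s (l.take i) u ∧ A.Steps u (l.drop i) s' := by
  induction h generalizing i with
  | refl s => exact ⟨s, by simp [Steps.refl], by simp [Steps.refl]⟩
  | @step s t s'' a τ htr hsteps ih =>
    cases i with
    | zero => exact ⟨s, Steps.refl s, Steps.step htr hsteps⟩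
    | succ i =>
      obtain ⟨u, h1, h2⟩ := ih i
      exact ⟨u, Steps.step htr h1, h2⟩

lemma det_steps {A : LTS Act} (hA : A.Deterministic) {s : A.State} {l : List Act}
    {s₁ s₂ : A.State} (h₁ : A.Steps s l s₁) (h₂ : A.Steps s l s₂) : s₁ = s₂ := by
  induction h₁ generalizing s₂ with
  | refl => cases h₂; rfl
  | @step s t s'' a τ htr hsteps ih =>
    cases h₂ with
    | step htr' hsteps' =>
      have := hA _ _ _ _ htr htr'
      subst this
      exact ih hsteps'

lemma prod_det {A B : LTS Act} (hA : A.Deterministic) (hB : B.Deterministic) :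
    (A.prod B).Deterministic := by
  rintro ⟨s, t⟩ a ⟨s₁, t₁⟩ ⟨s₂, t₂⟩ h1 h2
  rcases h1 with ⟨ha1, hb1, ht1, ht1'⟩ | ⟨ha1, hb1, ht1, ht1'⟩ | ⟨ha1, hb1, ht1, ht1'⟩ <;>
    rcases h2 with ⟨ha2, hb2, ht2, ht2'⟩ | ⟨ha2, hb2, ht2, ht2'⟩ | ⟨ha2, hb2, ht2, ht2'⟩
  · exact Prod.ext (hA _ _ _ _ ht1 ht2) (hB _ _ _ _ ht1' ht2')
  · exact absurd hb1 hb2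
  · exact absurd ha1 ha2
  · exact absurd hb2 hb1
  · exact Prod.ext (hA _ _ _ _ ht1 ht2) (ht1'.trans ht2'.symm)
  · exact absurd ha1 ha2
  · exact absurd ha2 ha1
  · exact absurd ha2 ha1
  · exact Prod.ext (ht1'.trans ht2'.symm) (hB _ _ _ _ ht1 ht2)

end SRefAux
end Helpers

section Main
namespace SRefAux
open LTS

/-- Auxiliary program: a linear LTS following the word `τP`, with an
`a₀`-self-loop at the end. -/
def auxP {Act : Type} (Alph : Set Act) (τP : List Act) (a₀ : Act) : LTS Act where
  State := ℕ
  init := 0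
  alphabet := Alph
  tr i a j :=
    (∃ h : i < τP.length, a = τP.get ⟨i, h⟩ ∧ j = i + 1) ∨
    (i = τP.length ∧ a = a₀ ∧ j = i)

lemma auxP_det {Act : Type} (Alph : Set Act) (τP : List Act) (a₀ : Act) :
    (auxP Alph τP a₀).Deterministic := by
  rintro i a j₁ j₂ h1 h2
  rcases h1 with ⟨h, ha, rfl⟩ | ⟨he, ha, rfl⟩ <;>
    rcases h2 with ⟨h', ha', rfl⟩ | ⟨he', ha', rfl⟩ <;>
    first
      | rfl
      | omega

lemma prod_steps_fst {Act : Type} {A B : LTS Act} {p q : (A.prod B).State} {l : List Act}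
    (h : (A.prod B).Steps p l q) : A.Steps p.1 (proj A.alphabet l) q.1 := by
  induction h with
  | refl s => exact (by simpa [proj] using Steps.refl (A := A) s.1)
  | @step p p' q a τ htr _ ih =>
    rcases htr with ⟨ha, hb, ht, ht'⟩ | ⟨ha, hb, ht, ht'⟩ | ⟨ha, hb, ht, ht'⟩
    · simpa [proj, ha] using Steps.step ht ih
    · simpa [proj, ha] using Steps.step ht ih
    · simpa [proj, ha] using ht' ▸ ih

lemma auxP_sim₁ {Act : Type} {P O : LTS Act} (τP : List Act) (a₀ : Act)
    {σ : List Act} {st st' : (P.prod O).State}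
    (h : (P.prod O).Steps st σ st') :
    ∀ i ≤ τP.length, proj P.alphabet σ = τP.drop i →
      ((auxP P.alphabet τP a₀).prod O).Steps (i, st.2) σ (τP.length, st'.2) := by
  induction h with
  | refl s =>
    intro i hi hp
    simp only [proj] at hp
    have : τP.length ≤ i := List.drop_eq_nil_iff.mp hp.symm
    have : i = τP.length := le_antisymm hi this
    subst this
    exact Steps.refl _
  | @step st mid st'' a σ' htr _ ih =>
    intro i hi hp
    rcases htr with ⟨ha, hb, ht, ht'⟩ | ⟨ha, hb, ht, ht'⟩ | ⟨ha, hb, ht, ht'⟩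
    · simp only [proj, ha, if_true] at hp
      have hlt : i < τP.length := by
        by_contra hge
        rw [List.drop_eq_nil_of_le (by omega)] at hp
        exact List.cons_ne_nil _ _ hp
      rw [List.drop_eq_getElem_cons hlt] at hp
      obtain ⟨hpa, hps⟩ := List.cons.injEq .. ▸ hp
      refine Steps.step (s' := (i + 1, mid.2)) ?_ (ih (i + 1) hlt ?_)
      · exact Or.inl ⟨ha, hb, Or.inl ⟨hlt, by simp [hpa], rfl⟩, ht'⟩
      · exact hps
    · simp only [proj, ha, if_true] at hp
      have hlt : i < τP.length := by
        by_contra hge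
        rw [List.drop_eq_nil_of_le (by omega)] at hp
        exact List.cons_ne_nil _ _ hp
      rw [List.drop_eq_getElem_cons hlt] at hp
      obtain ⟨hpa, hps⟩ := List.cons.injEq .. ▸ hp
      refine Steps.step (s' := (i + 1, mid.2)) ?_ (ih (i + 1) hlt hps)
      · exact Or.inr (Or.inl ⟨ha, hb, Or.inl ⟨hlt, by simp [hpa], rfl⟩, ht'⟩)
    · simp only [proj, ha, if_false] at hp
      refine Steps.step (s' := (i, mid.2)) ?_ (ih i hi hp)
      exact Or.inr (Or.inr ⟨ha, hb, ht, rfl⟩)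

lemma auxP_sim₂ {Act : Type} {P O : LTS Act} {τP : List Act} {a₀ : Act} {Sp : Set Act}
    (hdet : P.Deterministic) (hSpP : Sp ⊆ P.alphabet) (ha₀ : a₀ ∈ Sp)
    (hτPalph : ∀ a ∈ τP, a ∈ P.alphabet)
    {pend : P.State} (hrun : P.Steps P.init τP pend)
    {σ : List Act} {st st' : ((auxP P.alphabet τP a₀).prod O).State}
    (h : ((auxP P.alphabet τP a₀).prod O).Steps st σ st') :
    ∀ p : P.State, P.Steps P.init (τP.take st.1) p →
      (∃ p', (P.prod O).Steps (p, st.2) σ (p', st'.2)) ∨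
      (proj Sp (τP.drop st.1)).length < (proj Sp σ).length := by
  induction h with
  | refl s => exact fun p _ => Or.inl ⟨p, Steps.refl _⟩
  | @step st mid st'' a σ' htr _ ih =>
    intro p hp
    rcases htr with ⟨ha, hb, ht, ht'⟩ | ⟨ha, hb, ht, ht'⟩ | ⟨ha, hb, ht, ht'⟩
    · -- synchronized step
      rcases ht with ⟨hlt, rfl, hmid1⟩ | ⟨he, rfl, hmid1⟩
      · -- edge of auxP
        simp only [List.get_eq_getElem] at ha hb ht' ⊢
        obtain ⟨u, hu1, hu2⟩ := steps_take_drop hrun st.1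
        rw [List.drop_eq_getElem_cons hlt] at hu2
        cases hu2 with
        | step htr2 _ =>
          rename_i p₂ _
          have hup : u = p := det_steps hdet hu1 hp
          subst hup
          have htake : P.Steps P.init (τP.take mid.1) p₂ := by
            simp only [hmid1, List.take_succ, List.getElem?_eq_getElem hlt,
              Option.toList_some]
            rw [List.take_succ_eq_append_getElem hlt]
            exact steps_append hu1 (Steps.step htr2 (Steps.refl _))
          rcases ih p₂ htake with ⟨p', hg⟩ | hbad
          · refine Or.inl ⟨p', Steps.step ?_ hg⟩
            exact Or.inl ⟨hτPalph _ (List.getElem_mem hlt), hb, htr2, ht'⟩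
          · right
            rw [hmid1] at hbad
            rw [List.drop_eq_getElem_cons hlt]
            simp only [proj]
            split <;> (try simp only [List.length_cons]) <;> omega
      · -- loop of auxP
        right
        rw [he, List.drop_length]
        simp [proj, ha₀]
    · -- auxP-only step
      rcases ht with ⟨hlt, rfl, hmid1⟩ | ⟨he, rfl, hmid1⟩
      · -- edge of auxP
        simp only [List.get_eq_getElem] at ha hb ⊢
        obtain ⟨u, hu1, hu2⟩ := steps_take_drop hrun st.1
        rw [List.drop_eq_getElem_cons hlt] at hu2
        cases hu2 with
        | step htr2 _ =>
          rename_i p₂ _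
          have hup : u = p := det_steps hdet hu1 hp
          subst hup
          have htake : P.Steps P.init (τP.take mid.1) p₂ := by
            simp only [hmid1, List.take_succ, List.getElem?_eq_getElem hlt,
              Option.toList_some]
            rw [List.take_succ_eq_append_getElem hlt]
            exact steps_append hu1 (Steps.step htr2 (Steps.refl _))
          rcases ih p₂ htake with ⟨p', hg⟩ | hbad
          · refine Or.inl ⟨p', Steps.step ?_ hg⟩
            exact Or.inr (Or.inl ⟨hτPalph _ (List.getElem_mem hlt), hb, htr2, ht'⟩)
          · right
            rw [hmid1] at hbad
            rw [List.drop_eq_getElem_cons hlt]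
            simp only [proj]
            split <;> (try simp only [List.length_cons]) <;> omega
      · -- loop of auxP
        right
        rw [he, List.drop_length]
        simp [proj, ha₀]
    · -- O-only step
      have haSp : a ∉ Sp := fun hs => ha (hSpP hs)
      rcases ih p (by rw [ht']; exact hp) with ⟨p', hg⟩ | hbad
      · refine Or.inl ⟨p', Steps.step ?_ hg⟩
        exact Or.inr (Or.inr ⟨ha, hb, ht, rfl⟩)
      · right
        rw [ht'] at hbad
        simpa [proj, haSp] using hbad

end SRefAux
end Main

namespace SRefAux

lemma getElem_take'' {α : Type} (l : List α) {m i : ℕ} (hi : i < m) (h2 : i < l.length) :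
    (l.take m)[i]'(by simp; omega) = l[i] := by
  apply Option.some.inj
  rw [← List.getElem?_eq_getElem, ← List.getElem?_eq_getElem,
    List.getElem?_take_of_lt hi]

end SRefAux


/-- If the object `O₁` strongly observationally refines the
object `O₂`, then `O₁` observationally refines `O₂`: for every program `P`
over alphabet `Sp ∪ C ∪ R`, `T(P × O₁)|Sp ⊆ T(P × O₂)|Sp`. -/
theorem strongRefines_implies_obsRefines {M D K I : Type}
    (O₁ O₂ : LTS (OAction M D K I)) (C R : Set (OAction M D K I))
    (h₁ : IsObject O₁ C R) (h₂ : IsObject O₂ C R)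
    (href : StrongRefines O₁ O₂ C R) :
    ObsRefines O₁ O₂ C R := by
  intro Sp P hP hd₁ hd₂ x hx
  obtain ⟨τ, hτT, rfl⟩ := hx
  rcases Set.eq_empty_or_nonempty Sp with rfl | ⟨a₀, ha₀⟩
  · exact ⟨[], ⟨(P.prod O₂).init, LTS.Steps.refl _⟩,
      by rw [SRefAux.proj_empty, SRefAux.proj_empty]⟩
  obtain ⟨⟨pend, oend⟩, hτ⟩ := hτT
  have hSpP : Sp ⊆ P.alphabet := by rw [hP.alph]; exact Set.subset_union_left
  set τP : List (OAction M D K I) := proj P.alphabet τ with hτPdef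
  set P' : LTS (OAction M D K I) := SRefAux.auxP P.alphabet τP a₀ with hP'def
  have hτPalph : ∀ a ∈ τP, a ∈ P.alphabet := fun a ha => SRefAux.mem_proj ha
  have hPrun : P.Steps P.init τP pend := SRefAux.prod_steps_fst hτ
  have hrunτ : (P'.prod O₁).Steps (P'.prod O₁).init τ (τP.length, oend) :=
    SRefAux.auxP_sim₁ τP a₀ hτ 0 (Nat.zero_le _) (by simp; rfl)
  set S₁ : Scheduler (OAction M D K I) := fun σ => {τ.getD σ.length a₀} with hS₁def
  have hdetS₁ : DetScheduler S₁ Sp := fun σ => Or.inr ⟨_, rfl⟩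
  have hgetD_lt : ∀ (i : ℕ) (h : i < τ.length), τ.getD i a₀ = τ.get ⟨i, h⟩ := by
    intro i h
    simp [List.getD_eq_getElem?_getD, List.getElem?_eq_getElem h]
  have hgetD_ge : ∀ (i : ℕ), τ.length ≤ i → τ.getD i a₀ = a₀ := by
    intro i h
    simp [List.getD_eq_getElem?_getD, List.getElem?_eq_none h]
  have hconsτ : ConsistentWith S₁ τ := by
    intro i h
    show τ.get ⟨i, h⟩ ∈ ({τ.getD (τ.take i).length a₀} : Set _)
    rw [List.length_take, min_eq_left (le_of_lt h), hgetD_lt i h]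
    exact rfl
  have hdetPO₁ : (P'.prod O₁).Deterministic :=
    SRefAux.prod_det (SRefAux.auxP_det _ _ _) h₁.det
  have hshape : ∀ σ : List (OAction M D K I), ConsistentWith S₁ σ →
      ∀ (i : ℕ) (h : i < σ.length), σ[i] = τ.getD i a₀ := by
    intro σ hσ i h
    have hmem := hσ i h
    have hlen : (σ.take i).length = i := by rw [List.length_take]; omega
    simp only [hS₁def, hlen, Set.mem_singleton_iff, List.get_eq_getElem] at hmem
    exact hmem
  have hloopstep : (P'.prod O₁).tr (τP.length, oend) a₀ (τP.length, oend) :=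
    Or.inr (Or.inl ⟨hSpP ha₀, Set.disjoint_left.mp hd₁ ha₀, Or.inr ⟨rfl, rfl, rfl⟩, rfl⟩)
  have hloop : ∀ (k : ℕ),
      (P'.prod O₁).Steps (τP.length, oend) (List.replicate k a₀) (τP.length, oend) := by
    intro k
    induction k with
    | zero => exact LTS.Steps.refl _
    | succ k ih =>
      rw [List.replicate_succ]
      exact LTS.Steps.step hloopstep ih
  have hadm₁ : AdmittedBy S₁ (P'.prod O₁) := by
    rintro σ ⟨hσT, hσC⟩
    refine ⟨⟨τ.getD σ.length a₀, rfl⟩, ?_⟩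
    rintro a ha s hs
    have haeq : a = τ.getD σ.length a₀ := ha
    subst haeq
    by_cases hlen : σ.length < τ.length
    · have hσeq : σ = τ.take σ.length := by
        apply List.ext_getElem
        · rw [List.length_take]; omega
        · intro i h1 h2
          rw [SRefAux.getElem_take'' τ h1 (by omega), hshape σ hσC i h1,
            hgetD_lt i (by omega), List.get_eq_getElem]
      obtain ⟨u, hu1, hu2⟩ := SRefAux.steps_take_drop hrunτ σ.length
      rw [List.drop_eq_getElem_cons hlen] at hu2
      cases hu2 with
      | step htr3 _ =>
        rw [hσeq] at hs
        have hsu : s = u := SRefAux.det_steps hdetPO₁ hs hu1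
        rw [hgetD_lt σ.length hlen, List.get_eq_getElem, hsu]
        exact ⟨_, htr3⟩
    · push_neg at hlen
      have hσeq : σ = τ ++ List.replicate (σ.length - τ.length) a₀ := by
        apply List.ext_getElem
        · rw [List.length_append, List.length_replicate]; omega
        · intro i h1 h2
          by_cases hi : i < τ.length
          · rw [List.getElem_append_left hi, hshape σ hσC i h1, hgetD_lt i hi,
              List.get_eq_getElem]
          · rw [List.getElem_append_right (by omega), List.getElem_replicate,
              hshape σ hσC i h1, hgetD_ge i (by omega)]
      have hrunσ : (P'.prod O₁).Steps (P'.prod O₁).init σ (τP.length, oend) := by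
        rw [hσeq]
        exact SRefAux.steps_append hrunτ (hloop _)
      have hsu : s = (τP.length, oend) := SRefAux.det_steps hdetPO₁ hs hrunσ
      rw [hgetD_ge σ.length hlen, hsu]
      exact ⟨_, hloopstep⟩
  have hProg : IsProgram P' C R Sp := by
    refine ⟨hP.alph, hP.disj, ?_, SRefAux.auxP_det _ _ _⟩
    rintro s a s' (⟨h, rfl, rfl⟩ | ⟨he, rfl, rfl⟩)
    · exact hτPalph _ (List.get_mem _ _)
    · exact hSpP ha₀
  obtain ⟨S₂, hdetS₂, hadm₂, heq⟩ := href Sp P' hProg hd₁ hd₂ S₁ hdetS₁ hadm₁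
  have hmem : proj Sp τ ∈ proj Sp '' TracesWith (P'.prod O₁) S₁ :=
    ⟨τ, ⟨⟨(τP.length, oend), hrunτ⟩, hconsτ⟩, rfl⟩
  rw [heq] at hmem
  obtain ⟨σ, ⟨⟨st', hσsteps⟩, _⟩, hσproj⟩ := hmem
  rcases SRefAux.auxP_sim₂ hP.det hSpP ha₀ hτPalph hPrun hσsteps P.init
      (LTS.Steps.refl _) with ⟨p', hg⟩ | hbad
  · exact ⟨σ, ⟨(p', st'.2), hg⟩, hσproj⟩
  · exfalso
    have hbad' : (proj Sp (τP.drop 0)).length < (proj Sp σ).length := hbad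
    rw [List.drop_zero, hτPdef, SRefAux.proj_proj hSpP, ← hσproj] at hbad'
    exact lt_irrefl _ hbad'
end

section
/- Let $O[S_1]$ be an object parametrized by a base object specification $S_1$, i.e., $O[S_1]=S_1\times C$ where $C$ is the context LTS in which the base object is used (the alphabets of $S_1$ and $C$ share the call/return actions of $S_1$, and the alphabet of $C$ contains the call/return actions of $O$). If $O[S_1]\le_s S$ and $O_1\le_s S_1$, then $O[O_1]\le_s S$. -/
set_option autoImplicit false

section Helpers
variable {Act : Type}

theorem proj_append (Γ : Set Act) (l₁ l₂ : List Act) :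
    proj Γ (l₁ ++ l₂) = proj Γ l₁ ++ proj Γ l₂ := by
  induction l₁ with
  | nil => simp [proj]
  | cons a t ih => by_cases h : a ∈ Γ <;> simp [proj, h, ih]

theorem proj_proj {Γ Γ' : Set Act} (h : Γ ⊆ Γ') (l : List Act) :
    proj Γ (proj Γ' l) = proj Γ l := by
  induction l with
  | nil => rfl
  | cons a t ih =>
    by_cases h1 : a ∈ Γ'
    · by_cases h2 : a ∈ Γ <;> simp [proj, h1, h2, ih]
    · have h2 : a ∉ Γ := fun hc => h1 (h hc)
      simp [proj, h1, h2, ih]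

theorem prefix_proj (Γ : Set Act) {l₁ l₂ : List Act} (h : l₁ <+: l₂) :
    proj Γ l₁ <+: proj Γ l₂ := by
  obtain ⟨t, rfl⟩ := h
  exact ⟨proj Γ t, (proj_append Γ l₁ t).symm⟩

theorem steps_snoc {A : LTS Act} {s m m' : A.State} {τ : List Act} {a : Act}
    (h : A.Steps s τ m) (h2 : A.tr m a m') : A.Steps s (τ ++ [a]) m' := by
  induction h with
  | refl s => exact .step h2 (.refl _)
  | step htr hs ih => exact .step htr (ih h2)

theorem steps_split {A : LTS Act} {s s'' : A.State} {τ₁ τ₂ : List Act}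
    (h : A.Steps s (τ₁ ++ τ₂) s'') : ∃ m, A.Steps s τ₁ m ∧ A.Steps m τ₂ s'' := by
  induction τ₁ generalizing s with
  | nil => exact ⟨s, .refl s, h⟩
  | cons a t ih =>
    cases h with
    | step htr hs =>
      obtain ⟨m, h1, h2⟩ := ih hs
      exact ⟨m, .step htr h1, h2⟩

theorem traces_take {A : LTS Act} {τ : List Act} (h : τ ∈ A.Traces) (i : ℕ) :
    τ.take i ∈ A.Traces := by
  obtain ⟨s, hs⟩ := h
  rw [← List.take_append_drop i τ] at hs
  obtain ⟨m, h1, _⟩ := steps_split hs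
  exact ⟨m, h1⟩

theorem consistent_take {S : Scheduler Act} {τ : List Act}
    (h : ConsistentWith S τ) (i : ℕ) : ConsistentWith S (τ.take i) := by
  intro j hj
  have hji : j < i := lt_of_lt_of_le hj (by simp)
  have hjl : j < τ.length := lt_of_lt_of_le hj (by simp)
  have h1 : (τ.take i).get ⟨j, hj⟩ = τ.get ⟨j, hjl⟩ := by
    simp [List.get_eq_getElem, List.getElem_take]
  have h2 : (τ.take i).take j = τ.take j := by
    rw [List.take_take]; simp [Nat.min_eq_left (le_of_lt hji)]
  rw [h1, h2]; exact h j hjl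

theorem consistent_snoc {S : Scheduler Act} {τ : List Act} {a : Act}
    (h : ConsistentWith S τ) (ha : a ∈ S τ) : ConsistentWith S (τ ++ [a]) := by
  intro i hi
  have hi' : i < τ.length + 1 := by simpa using hi
  rcases Nat.lt_or_ge i τ.length with hlt | hge
  · have h1 : (τ ++ [a]).get ⟨i, hi⟩ = τ.get ⟨i, hlt⟩ := by
      simp [List.get_eq_getElem, List.getElem_append_left hlt]
    have h2 : (τ ++ [a]).take i = τ.take i := by
      rw [List.take_append_of_le_length (le_of_lt hlt)]
    rw [h1, h2]; exact h i hlt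
  · have hie : i = τ.length := by omega
    subst hie
    have h1 : (τ ++ [a]).get ⟨τ.length, hi⟩ = a := by
      simp [List.get_eq_getElem]
    have h2 : (τ ++ [a]).take τ.length = τ := by
      simp
    rw [h1, h2]; exact ha

theorem tracesWith_take {A : LTS Act} {S : Scheduler Act} {τ : List Act}
    (h : τ ∈ TracesWith A S) (i : ℕ) : τ.take i ∈ TracesWith A S :=
  ⟨traces_take h.1 i, consistent_take h.2 i⟩

theorem tracesWith_snoc {A : LTS Act} {S : Scheduler Act} {τ : List Act} {a : Act}
    (h : τ ∈ TracesWith A S) (ha : a ∈ S τ)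
    (hen : ∀ s, A.Steps A.init τ s → ∃ s', A.tr s a s') :
    τ ++ [a] ∈ TracesWith A S := by
  obtain ⟨s, hs⟩ := h.1
  obtain ⟨s', hs'⟩ := hen s hs
  exact ⟨⟨s', steps_snoc hs hs'⟩, consistent_snoc h.2 ha⟩

end Helpers
section Helpers2
variable {Act : Type}

theorem tracesWith_congr {A : LTS Act} {S S' : Scheduler Act}
    (h : ∀ τ ∈ TracesWith A S, S' τ = S τ) :
    TracesWith A S' = TracesWith A S := by
  ext τ
  constructor
  · rintro ⟨htr, hc⟩
    have key : ∀ i, i ≤ τ.length → τ.take i ∈ TracesWith A S := by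
      intro i
      induction i with
      | zero => intro _; exact ⟨⟨A.init, .refl _⟩, fun j hj => by simp at hj⟩
      | succ i ih =>
        intro hle
        have hi : i < τ.length := by omega
        have hprev := ih (le_of_lt hi)
        have hmem : τ.get ⟨i, hi⟩ ∈ S (τ.take i) := by
          have := hc i hi
          rw [h _ hprev] at this
          exact this
        have htk : τ.take (i+1) = τ.take i ++ [τ.get ⟨i, hi⟩] := by
          simp [List.get_eq_getElem]
        refine ⟨traces_take htr (i+1), ?_⟩
        rw [htk]
        exact consistent_snoc hprev.2 hmem
    have := key τ.length (le_refl _)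
    simpa using this
  · rintro ⟨htr, hc⟩
    refine ⟨htr, fun i hi => ?_⟩
    rw [h _ (tracesWith_take ⟨htr, hc⟩ i)]
    exact hc i hi

theorem diverge {α : Type} : ∀ (l₁ l₂ : List α), ¬ l₁ <+: l₂ → ¬ l₂ <+: l₁ →
    ∃ (ρ r r' : List α) (c c' : α), c ≠ c' ∧ l₁ = ρ ++ c :: r ∧ l₂ = ρ ++ c' :: r'
  | [], l₂, h₁, _ => absurd (List.nil_prefix) h₁
  | l₁, [], _, h₂ => absurd (List.nil_prefix) h₂
  | x :: xs, y :: ys, h₁, h₂ => by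
    by_cases hxy : x = y
    · subst hxy
      have h₁' : ¬ xs <+: ys := fun h => h₁ (by simpa using h)
      have h₂' : ¬ ys <+: xs := fun h => h₂ (by simpa using h)
      obtain ⟨ρ, r, r', c, c', hne, e1, e2⟩ := diverge xs ys h₁' h₂'
      exact ⟨x :: ρ, r, r', c, c', hne, by simp [e1], by simp [e2]⟩
    · exact ⟨[], xs, ys, x, y, hxy, rfl, rfl⟩

end Helpers2
section Helpers3
variable {Act : Type}

theorem branch_in_Sp {S : Scheduler Act} {Sp Γ : Set Act}
    (hdet : DetScheduler S Sp) (hsub : Sp ⊆ Γ)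
    {σ σ' u : List Act} {b b' : Act}
    (hσ : ConsistentWith S σ) (hσ' : ConsistentWith S σ')
    (hne : b ≠ b') (h1 : proj Γ σ = u ++ [b]) (h2 : proj Γ σ' = u ++ [b']) :
    b ∈ Sp := by
  have hnp : ¬ σ <+: σ' := by
    intro hp
    have := prefix_proj Γ hp
    rw [h1, h2] at this
    have := List.IsPrefix.eq_of_length this (by simp)
    exact hne (by simpa using this)
  have hnp' : ¬ σ' <+: σ := by
    intro hp
    have := prefix_proj Γ hp
    rw [h1, h2] at this
    have := List.IsPrefix.eq_of_length this (by simp)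
    exact hne (by simpa using this.symm)
  obtain ⟨ρ, r, r', c, c', hcc, e1, e2⟩ := diverge σ σ' hnp hnp'
  have hlen1 : ρ.length < σ.length := by rw [e1]; simp
  have hc : c ∈ S ρ := by
    have h0 := hσ ρ.length hlen1
    have hget : σ.get ⟨ρ.length, hlen1⟩ = c := by
      simp only [List.get_eq_getElem]
      subst e1
      rw [List.getElem_append_right (le_refl ρ.length)]
      simp
    have htake : σ.take ρ.length = ρ := by
      rw [e1]; exact List.take_left
    rwa [hget, htake] at h0
  have hlen2 : ρ.length < σ'.length := by rw [e2]; simp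
  have hc' : c' ∈ S ρ := by
    have h0 := hσ' ρ.length hlen2
    have hget : σ'.get ⟨ρ.length, hlen2⟩ = c' := by
      simp only [List.get_eq_getElem]
      subst e2
      rw [List.getElem_append_right (le_refl ρ.length)]
      simp
    have htake : σ'.take ρ.length = ρ := by
      rw [e2]; exact List.take_left
    rwa [hget, htake] at h0
  have hSp : S ρ ⊆ Sp := by
    rcases hdet ρ with h | ⟨a, ha⟩
    · exact h
    · rw [ha] at hc hc'
      exact absurd (hc.trans hc'.symm) hcc
  have hcSp : c ∈ Sp := hSp hc
  have hcSp' : c' ∈ Sp := hSp hc'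
  have p1 : u ++ [b] = proj Γ ρ ++ c :: proj Γ r := by
    rw [← h1, e1, proj_append]
    simp [proj, hsub hcSp]
  have p2 : u ++ [b'] = proj Γ ρ ++ c' :: proj Γ r' := by
    rw [← h2, e2, proj_append]
    simp [proj, hsub hcSp']
  set v := proj Γ ρ with hv
  have hvu : v.length = u.length := by
    rcases Nat.lt_trichotomy v.length u.length with hlt | heq | hgt
    · exfalso
      have g1 : (u ++ [b])[v.length]? = some c := by
        rw [p1, List.getElem?_append_right (le_refl v.length)]
        simp
      have g2 : (u ++ [b'])[v.length]? = some c' := by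
        rw [p2, List.getElem?_append_right (le_refl v.length)]
        simp
      rw [List.getElem?_append, if_pos hlt] at g1
      rw [List.getElem?_append, if_pos hlt] at g2
      exact hcc (by rw [g1] at g2; exact Option.some_injective _ g2)
    · exact heq
    · exfalso
      have := congrArg List.length p1
      simp at this
      omega
  obtain ⟨hu, hb⟩ := List.append_inj p1 hvu.symm
  have hbc : b = c := by
    have h := hb
    simp at h
    exact h.1
  rw [hbc]; exact hcSp

end Helpers3
section Transfer
variable {Act : Type}

theorem steps_map {A B : LTS Act} {f : A.State → B.State}
    (htr : ∀ s a s', A.tr s a s' → B.tr (f s) a (f s'))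
    {s s' : A.State} {τ : List Act} (h : A.Steps s τ s') :
    B.Steps (f s) τ (f s') := by
  induction h with
  | refl s => exact .refl _
  | step h1 h2 ih => exact .step (htr _ _ _ h1) ih

theorem steps_unmap {A B : LTS Act} {f : A.State → B.State} {g : B.State → A.State}
    (hfg : ∀ t, f (g t) = t)
    (htr : ∀ s a s', B.tr (f s) a (f s') → A.tr s a s')
    {t t' : B.State} {τ : List Act} (h : B.Steps t τ t') :
    ∀ s, f s = t → ∃ s', f s' = t' ∧ A.Steps s τ s' := by
  induction h with
  | refl s => exact fun s hs => ⟨s, hs, .refl _⟩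
  | step h1 h2 ih =>
    intro s hs
    rename_i t t₁ t' a τ
    obtain ⟨s₁', hfs₁, hsteps⟩ := ih (g t₁) (hfg t₁)
    refine ⟨s₁', hfs₁, .step (htr s a (g t₁) ?_) hsteps⟩
    rw [hs, hfg]; exact h1

theorem transfer {A B : LTS Act} (f : A.State → B.State) (g : B.State → A.State)
    (hfg : ∀ t, f (g t) = t) (hinit : f A.init = B.init)
    (htr : ∀ s a s', A.tr s a s' ↔ B.tr (f s) a (f s')) :
    A.Traces = B.Traces ∧
    (∀ S : Scheduler Act, TracesWith A S = TracesWith B S) ∧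
    (∀ S : Scheduler Act, AdmittedBy S A ↔ AdmittedBy S B) := by
  have htraces : A.Traces = B.Traces := by
    ext τ
    constructor
    · rintro ⟨s, hs⟩
      exact ⟨f s, hinit ▸ steps_map (fun s a s' h => (htr s a s').mp h) hs⟩
    · rintro ⟨t, ht⟩
      obtain ⟨s', _, hsteps⟩ :=
        steps_unmap hfg (fun s a s' h => (htr s a s').mpr h) ht A.init hinit
      exact ⟨s', hsteps⟩
  have htw : ∀ S : Scheduler Act, TracesWith A S = TracesWith B S := by
    intro S; unfold TracesWith; rw [htraces]
  refine ⟨htraces, htw, fun S => ?_⟩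
  constructor
  · intro hadm τ hτ
    obtain ⟨hne, hen⟩ := hadm τ ((htw S).symm ▸ hτ)
    refine ⟨hne, fun a ha t ht => ?_⟩
    obtain ⟨s, hfs, hsteps⟩ :=
      steps_unmap hfg (fun s a s' h => (htr s a s').mpr h) ht A.init hinit
    obtain ⟨s', hs'⟩ := hen a ha s hsteps
    exact ⟨f s', hfs ▸ (htr s a s').mp hs'⟩
  · intro hadm τ hτ
    obtain ⟨hne, hen⟩ := hadm τ ((htw S) ▸ hτ)
    refine ⟨hne, fun a ha s hs => ?_⟩
    obtain ⟨t', ht'⟩ := hen a ha (f s) (hinit ▸ steps_map (fun s a s' h => (htr s a s').mp h) hs)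
    refine ⟨g t', (htr s a (g t')).mpr ?_⟩
    rw [hfg]; exact ht'
end Transfer

section ProdLemmas
variable {Act : Type}

theorem prod_tr_iff (A B : LTS Act) (p q : A.State × B.State) (a : Act) :
    (A.prod B).tr p a q ↔
      ((a ∈ A.alphabet ∨ a ∈ B.alphabet) ∧
       (a ∈ A.alphabet → A.tr p.1 a q.1) ∧ (a ∉ A.alphabet → q.1 = p.1) ∧
       (a ∈ B.alphabet → B.tr p.2 a q.2) ∧ (a ∉ B.alphabet → q.2 = p.2)) := by
  show ((a ∈ A.alphabet ∧ a ∈ B.alphabet ∧ _ ∧ _) ∨ _ ∨ _) ↔ _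
  by_cases hA : a ∈ A.alphabet <;> by_cases hB : a ∈ B.alphabet <;>
    simp [hA, hB] <;> tauto

theorem prod_det {A B : LTS Act} (hA : A.Deterministic) (hB : B.Deterministic) :
    (A.prod B).Deterministic := by
  intro s a s₁ s₂ h1 h2
  replace h1 := (prod_tr_iff A B s s₁ a).mp h1; replace h2 := (prod_tr_iff A B s s₂ a).mp h2
  obtain ⟨-, hA1, hA1', hB1, hB1'⟩ := h1
  obtain ⟨-, hA2, hA2', hB2, hB2'⟩ := h2
  have e1 : s₁.1 = s₂.1 := by
    by_cases h : a ∈ A.alphabet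
    · exact hA _ _ _ _ (hA1 h) (hA2 h)
    · rw [hA1' h, hA2' h]
  have e2 : s₁.2 = s₂.2 := by
    by_cases h : a ∈ B.alphabet
    · exact hB _ _ _ _ (hB1 h) (hB2 h)
    · rw [hB1' h, hB2' h]
  exact Prod.ext e1 e2

theorem prod_tr_alph {A B : LTS Act} {p q : A.State × B.State} {a : Act}
    (h : (A.prod B).tr p a q) : a ∈ (A.prod B).alphabet := by
  rw [prod_tr_iff] at h
  exact h.1
end ProdLemmas
section Triple
variable {Act : Type}

/-- Restrict a context LTS to transitions on alphabet actions satisfying a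
liveness side condition. -/
def restrictCtx (Cx : LTS Act) (live : Act → Prop) : LTS Act where
  State := Cx.State
  init := Cx.init
  alphabet := Cx.alphabet
  tr c a c' := Cx.tr c a c' ∧ a ∈ Cx.alphabet ∧ live a

theorem restrictCtx_tr (Cx : LTS Act) (live : Act → Prop)
    (c c' : Cx.State) (a : Act) :
    (restrictCtx Cx live).tr c a c' ↔ (Cx.tr c a c' ∧ a ∈ Cx.alphabet ∧ live a) :=
  Iff.rfl

theorem restrictCtx_alphabet (Cx : LTS Act) (live : Act → Prop) :
    (restrictCtx Cx live).alphabet = Cx.alphabet := rfl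

theorem prod_alphabet (A B : LTS Act) :
    (A.prod B).alphabet = A.alphabet ∪ B.alphabet := rfl

theorem prodState_mk_injEq (A B : LTS Act) (a1 b1 : A.State) (a2 b2 : B.State) :
    @Eq ((A.prod B).State) (a1, a2) (b1, b2) ↔
      (a1 = b1 ∧ a2 = b2) := iff_of_eq (Prod.mk.injEq a1 a2 b1 b2)

theorem triple_iso_tr (P X Cx : LTS Act) (live : Act → Prop)
    (hlive : ∀ a, a ∈ Cx.alphabet → (a ∉ X.alphabet ∨ ∃ s s', X.tr s a s') → live a) :
    ∀ (x : (P.prod (X.prod Cx)).State) (a : Act) (y : (P.prod (X.prod Cx)).State),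
      (P.prod (X.prod Cx)).tr x a y ↔
      ((P.prod (restrictCtx Cx live)).prod X).tr ((x.1, x.2.2), x.2.1) a
        ((y.1, y.2.2), y.2.1) := by
  rintro ⟨x1, x2, x3⟩ a ⟨y1, y2, y3⟩
  by_cases hP : a ∈ P.alphabet <;> by_cases hX : a ∈ X.alphabet <;>
    by_cases hC : a ∈ Cx.alphabet
  all_goals
    simp only [prod_tr_iff, restrictCtx_tr, restrictCtx_alphabet, prod_alphabet,
      Set.mem_union, Prod.mk.injEq, prodState_mk_injEq, hP, hX, hC, not_or, not_false_iff, not_true,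
      true_or, or_true, false_or, or_false, true_and, and_true, false_and,
      and_false, true_implies, false_implies, and_imp]
  case pos =>  -- all in
    have hl : X.tr x2 a y2 → live a := fun h => hlive a hC (Or.inr ⟨_, _, h⟩)
    tauto
  all_goals
    first
      | (have hl : X.tr x2 a y2 → live a := fun h => hlive a hC (Or.inr ⟨_, _, h⟩)
         tauto)
      | (have hl : live a := hlive a hC (Or.inl hX); tauto)
      | tauto
      | exact ⟨fun ⟨e1, e2, e3⟩ => ⟨by rw [e1, e3], e2⟩,
          fun ⟨e, e2⟩ => ⟨congrArg Prod.fst e, e2, congrArg Prod.snd e⟩⟩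
end Triple

/-- Instantiation: let `O[S₁] = S₁ × Ctx` be an object
parametrized by a base object specification `S₁` (the alphabets of `S₁` and
`Ctx` share exactly the call/return actions `C₁ ∪ R₁` of `S₁`, and the alphabet
of `Ctx` contains the call/return actions `C ∪ R` of `O`). If `O[S₁] ≤ₛ S` and
`O₁ ≤ₛ S₁`, then `O[O₁] ≤ₛ S`, where `O[O₁] = O₁ × Ctx` is the instantiation
of the base object by an implementation `O₁` over the same call/return
actions. -/
theorem strongRefines_instantiation {M D K I : Type}
    (S₁ O₁ S Ctx : LTS (OAction M D K I))
    (C₁ R₁ C R : Set (OAction M D K I))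
    (hS₁ : IsObject S₁ C₁ R₁) (hO₁ : IsObject O₁ C₁ R₁)
    (hS : IsObject S C R)
    (halph : O₁.alphabet = S₁.alphabet)
    (hshare : S₁.alphabet ∩ Ctx.alphabet = C₁ ∪ R₁)
    (hCR : C ∪ R ⊆ Ctx.alphabet)
    (hparam : IsObject (S₁.prod Ctx) C R)
    (hinst : IsObject (O₁.prod Ctx) C R)
    (h₁ : StrongRefines (S₁.prod Ctx) S C R)
    (h₂ : StrongRefines O₁ S₁ C₁ R₁) :
    StrongRefines (O₁.prod Ctx) S C R := by
  classical
  intro Sp P hP hdO hdS Ssch hdet hadm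
  have hCRctx : C₁ ∪ R₁ ⊆ Ctx.alphabet := by
    rw [← hshare]; exact Set.inter_subset_right
  -- the liveness predicate and restricted context
  set live : OAction M D K I → Prop :=
    fun a => a ∈ S₁.alphabet → (∃ s s', S₁.tr s a s') ∨ (∃ s s', O₁.tr s a s')
    with hlive_def
  set Cx' := restrictCtx Ctx live with hCx'_def
  -- Cx' is deterministic
  have hCx'det : Cx'.Deterministic := by
    rintro c a c₁ c₂ ⟨h1, hal, hli⟩ ⟨h2, -, -⟩
    by_cases hS1 : a ∈ S₁.alphabet
    · rcases hli hS1 with ⟨s, s', hs⟩ | ⟨s, s', hs⟩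
      · have t1 : (S₁.prod Ctx).tr (s, c) a (s', c₁) := Or.inl ⟨hS1, hal, hs, h1⟩
        have t2 : (S₁.prod Ctx).tr (s, c) a (s', c₂) := Or.inl ⟨hS1, hal, hs, h2⟩
        exact congrArg Prod.snd (hparam.det _ _ _ _ t1 t2)
      · have hO : a ∈ O₁.alphabet := by rw [halph]; exact hS1
        have t1 : (O₁.prod Ctx).tr (s, c) a (s', c₁) := Or.inl ⟨hO, hal, hs, h1⟩
        have t2 : (O₁.prod Ctx).tr (s, c) a (s', c₂) := Or.inl ⟨hO, hal, hs, h2⟩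
        exact congrArg Prod.snd (hinst.det _ _ _ _ t1 t2)
    · have t1 : (S₁.prod Ctx).tr (S₁.init, c) a (S₁.init, c₁) :=
        Or.inr (Or.inr ⟨hS1, hal, h1, rfl⟩)
      have t2 : (S₁.prod Ctx).tr (S₁.init, c) a (S₁.init, c₂) :=
        Or.inr (Or.inr ⟨hS1, hal, h2, rfl⟩)
      exact congrArg Prod.snd (hparam.det _ _ _ _ t1 t2)
  set P' := P.prod Cx' with hP'_def
  set Sp' := (P.alphabet ∪ Ctx.alphabet) \ (C₁ ∪ R₁) with hSp'_def
  have hSpP : Sp ⊆ P.alphabet := by rw [hP.alph]; exact Set.subset_union_left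
  have hSpCR₁ : Disjoint Sp (C₁ ∪ R₁) :=
    hdO.mono_right (hCRctx.trans Set.subset_union_right)
  have hSpSp' : Sp ⊆ Sp' := fun a ha =>
    ⟨Or.inl (hSpP ha), fun hc => Set.disjoint_left.mp hSpCR₁ ha hc⟩
  have hP' : IsProgram P' C₁ R₁ Sp' := by
    refine ⟨?_, Set.disjoint_sdiff_left, fun s a s' h => prod_tr_alph h, prod_det hP.det hCx'det⟩
    show P.alphabet ∪ Ctx.alphabet = Sp' ∪ (C₁ ∪ R₁)
    apply Set.Subset.antisymm
    · intro a ha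
      by_cases hc : a ∈ C₁ ∪ R₁
      · exact Or.inr hc
      · exact Or.inl ⟨ha, hc⟩
    · rintro a (⟨ha, -⟩ | ha)
      · exact ha
      · exact Or.inr (hCRctx ha)
  have hd2 : Disjoint Sp' S₁.alphabet := by
    rw [Set.disjoint_left]
    rintro a ⟨hu, hnc⟩ hS1
    rcases hu with hp | hctx
    · rw [hP.alph] at hp
      rcases hp with hsp | hcr
      · have : a ∈ (O₁.prod Ctx).alphabet := Or.inl (by rw [halph]; exact hS1)
        exact Set.disjoint_left.mp hdO hsp this
      · exact hnc (hshare ▸ ⟨hS1, hCR hcr⟩)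
    · exact hnc (hshare ▸ ⟨hS1, hctx⟩)
  have hd1 : Disjoint Sp' O₁.alphabet := by rw [halph]; exact hd2
  -- isomorphism transfers
  have isoO := transfer (A := P.prod (O₁.prod Ctx)) (B := P'.prod O₁)
    (fun x => ((x.1, x.2.2), x.2.1)) (fun y => (y.1.1, (y.2, y.1.2)))
    (fun t => rfl) rfl
    (triple_iso_tr P O₁ Ctx live (by
      intro a hal h hS1
      rcases h with hna | hex
      · exact absurd (by rw [halph]; exact hS1) hna
      · exact Or.inr hex))
  have isoS := transfer (A := P.prod (S₁.prod Ctx)) (B := P'.prod S₁)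
    (fun x => ((x.1, x.2.2), x.2.1)) (fun y => (y.1.1, (y.2, y.1.2)))
    (fun t => rfl) rfl
    (triple_iso_tr P S₁ Ctx live (by
      intro a hal h hS1
      rcases h with hna | hex
      · exact absurd hS1 hna
      · exact Or.inl hex))
  obtain ⟨htrO, htwO, hadmO⟩ := isoO
  obtain ⟨htrS, htwS, hadmS⟩ := isoS
  have hdet' : DetScheduler Ssch Sp' := fun τ =>
    (hdet τ).imp (fun h => h.trans hSpSp') id
  have hadm' : AdmittedBy Ssch (P'.prod O₁) := (hadmO Ssch).mp hadm
  obtain ⟨S₂, hS₂det, hS₂adm, hS₂eq⟩ := h₂ Sp' P' hP' hd1 hd2 Ssch hdet' hadm'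
  -- key: along consistent traces, S₂ is subsingleton or prescribes program actions
  have hkey : ∀ τ ∈ TracesWith (P'.prod S₁) S₂, (S₂ τ).Subsingleton ∨ S₂ τ ⊆ Sp := by
    intro τ hτ
    by_cases hss : (S₂ τ).Subsingleton
    · exact Or.inl hss
    · right
      obtain ⟨b₀, hb₀, b₁, hb₁, hne01⟩ := Set.not_subsingleton_iff.mp hss
      intro b hb
      have hex : ∃ b', b' ∈ S₂ τ ∧ b' ≠ b := by
        by_cases h : b₀ = b
        · exact ⟨b₁, hb₁, fun e => hne01 (h.trans e.symm)⟩
        · exact ⟨b₀, hb₀, h⟩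
      obtain ⟨b', hb', hbb'⟩ := hex
      have hsub' : S₂ τ ⊆ Sp' := by
        rcases hS₂det τ with h | ⟨a, ha⟩
        · exact h
        · exfalso
          rw [ha] at hb₀ hb₁
          exact hne01 (hb₀.trans hb₁.symm)
      have hen := (hS₂adm τ hτ).2
      have hτb : τ ++ [b] ∈ TracesWith (P'.prod S₁) S₂ :=
        tracesWith_snoc hτ hb (hen b hb)
      have hτb' : τ ++ [b'] ∈ TracesWith (P'.prod S₁) S₂ :=
        tracesWith_snoc hτ hb' (hen b' hb')
      have hub : proj Sp' (τ ++ [b]) ∈ proj Sp' '' TracesWith (P'.prod O₁) Ssch := by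
        rw [hS₂eq]; exact ⟨_, hτb, rfl⟩
      have hub' : proj Sp' (τ ++ [b']) ∈ proj Sp' '' TracesWith (P'.prod O₁) Ssch := by
        rw [hS₂eq]; exact ⟨_, hτb', rfl⟩
      obtain ⟨σ, hσmem, hσp⟩ := hub
      obtain ⟨σ', hσ'mem, hσ'p⟩ := hub'
      have e1 : proj Sp' (τ ++ [b]) = proj Sp' τ ++ [b] := by
        rw [proj_append]; simp [proj, hsub' hb]
      have e2 : proj Sp' (τ ++ [b']) = proj Sp' τ ++ [b'] := by
        rw [proj_append]; simp [proj, hsub' hb']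
      exact branch_in_Sp hdet hSpSp' hσmem.2 hσ'mem.2 (fun e => hbb' e.symm)
        (by rw [hσp, e1]) (by rw [hσ'p, e2])
  -- the determinized scheduler S₃
  set S₃ : Scheduler (OAction M D K I) :=
    fun τ => if (S₂ τ).Subsingleton ∨ S₂ τ ⊆ Sp then S₂ τ else ∅ with hS₃_def
  have hagree : ∀ τ ∈ TracesWith (P'.prod S₁) S₂, S₃ τ = S₂ τ := by
    intro τ hτ
    exact if_pos (hkey τ hτ)
  have htw3 : TracesWith (P'.prod S₁) S₃ = TracesWith (P'.prod S₁) S₂ :=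
    tracesWith_congr hagree
  have hdet3 : DetScheduler S₃ Sp := by
    intro τ
    by_cases h : (S₂ τ).Subsingleton ∨ S₂ τ ⊆ Sp
    · have e : S₃ τ = S₂ τ := if_pos h
      rcases h with h | h
      · rcases h.eq_empty_or_singleton with he | ⟨a, ha⟩
        · left; rw [e, he]; exact Set.empty_subset _
        · right; exact ⟨a, by rw [e, ha]⟩
      · left; rw [e]; exact h
    · left
      rw [show S₃ τ = ∅ from if_neg h]
      exact Set.empty_subset _
  have hadm3 : AdmittedBy S₃ (P'.prod S₁) := by
    intro τ hτ
    rw [htw3] at hτ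
    rw [hagree τ hτ]
    exact hS₂adm τ hτ
  have hadm3' : AdmittedBy S₃ (P.prod (S₁.prod Ctx)) := (hadmS S₃).mpr hadm3
  have hdS₁Ctx : Disjoint Sp (S₁.prod Ctx).alphabet := by
    have he : (S₁.prod Ctx).alphabet = (O₁.prod Ctx).alphabet := by
      show S₁.alphabet ∪ Ctx.alphabet = O₁.alphabet ∪ Ctx.alphabet
      rw [halph]
    rw [he]; exact hdO
  obtain ⟨S₄, hS₄det, hS₄adm, hS₄eq⟩ := h₁ Sp P hP hdS₁Ctx hdS S₃ hdet3 hadm3'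
  refine ⟨S₄, hS₄det, hS₄adm, ?_⟩
  have himg : ∀ T : Set (List (OAction M D K I)),
      proj Sp '' (proj Sp' '' T) = proj Sp '' T := by
    intro T
    rw [Set.image_image]
    exact Set.image_congr fun a _ => proj_proj hSpSp' a
  calc proj Sp '' TracesWith (P.prod (O₁.prod Ctx)) Ssch
      = proj Sp '' TracesWith (P'.prod O₁) Ssch := by rw [htwO Ssch]
    _ = proj Sp '' (proj Sp' '' TracesWith (P'.prod O₁) Ssch) := (himg _).symm
    _ = proj Sp '' (proj Sp' '' TracesWith (P'.prod S₁) S₂) := by rw [hS₂eq]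
    _ = proj Sp '' TracesWith (P'.prod S₁) S₂ := himg _
    _ = proj Sp '' TracesWith (P'.prod S₁) S₃ := by rw [htw3]
    _ = proj Sp '' TracesWith (P.prod (S₁.prod Ctx)) S₃ := by rw [htwS S₃]
    _ = proj Sp '' TracesWith (P.prod S) S₄ := hS₄eq
end
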